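/- Let n ≥ 1 and let β₁, β₂, β₃, β₄ be permutations of {1,…,2n} with β₁ connected. Then the chain functional F(β) := |β₁| + 2|γ_{n,n}⁻¹β₂| + |β₃| + |γ_{n,n}⁻¹β₃| + |β₄| + |β₁⁻¹β₂| + |β₂⁻¹β₃| + |β₃⁻¹β₄| satisfies F(β) ≥ 3(2n − 2) + 2. -/

import Mathlib

/-!
For a permutation `σ` of a finite set of size `m`, `cycleCount σ` is the number of cycles
(fixed points count as cycles) and `permLen σ = m - cycleCount σ` (the minimal number of
transpositions needed to write `σ`).  We model `{1,…,2n}` as `Fin n ⊕ Fin n`, the first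
summand being `{1,…,n}` and the second `{n+1,…,2n}`.  `gammaNN n` is the product of the
two `n`-cycles `(1,2,…,n)` and `(n+1,…,2n)`.
-/

/-- The number of cycles of a permutation, where fixed points count as cycles. -/
noncomputable def cycleCount {α : Type*} [Fintype α] [DecidableEq α]
    (σ : Equiv.Perm α) : ℕ :=
  Multiset.card σ.cycleType + (Fintype.card α - σ.support.card)

/-- `|σ| = m - #(σ)`, the minimal number of transpositions whose product is `σ`. -/
noncomputable def permLen {α : Type*} [Fintype α] [DecidableEq α]
    (σ : Equiv.Perm α) : ℕ :=
  Fintype.card α - cycleCount σ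

/-- `γ_{n,n}`: the product of the two `n`-cycles `(1,…,n)` and `(n+1,…,2n)`. -/
def gammaNN (n : ℕ) : Equiv.Perm (Fin n ⊕ Fin n) :=
  Equiv.sumCongr (finRotate n) (finRotate n)

/-- A permutation of `{1,…,2n}` is connected if some cycle of it contains both an
element of `{1,…,n}` and an element of `{n+1,…,2n}`. -/
def IsConnectedPerm {n : ℕ} (β : Equiv.Perm (Fin n ⊕ Fin n)) : Prop :=
  ∃ a b : Fin n, β.SameCycle (Sum.inl a) (Sum.inr b)

/-- The chain functional
`F(β) = |β₁| + 2|γ_{n,n}⁻¹β₂| + |β₃| + |γ_{n,n}⁻¹β₃| + |β₄| + |β₁⁻¹β₂| + |β₂⁻¹β₃| + |β₃⁻¹β₄|`. -/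
noncomputable def chainF {n : ℕ} (b₁ b₂ b₃ b₄ : Equiv.Perm (Fin n ⊕ Fin n)) : ℕ :=
  permLen b₁ + 2 * permLen ((gammaNN n)⁻¹ * b₂) + permLen b₃
    + permLen ((gammaNN n)⁻¹ * b₃) + permLen b₄
    + permLen (b₁⁻¹ * b₂) + permLen (b₂⁻¹ * b₃) + permLen (b₃⁻¹ * b₄)

/-!
The number of cycles `#σ` is the number of classes of the setoid `SameCycle σ`, and the numbers
of classes of setoids on an `m`-element set satisfy `#r + #s ≤ m + #(r ⊔ s)` (semimodularity of
the partition lattice). The cycle setoid of `στ` refines the join of those of `σ` and `τ`, which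
gives the triangle inequality `|στ| ≤ |σ| + |τ|`. The join of the cycle setoids of `β` and `β⁻¹γ`
is coarser than the cycle setoid of `γ`, whose classes are the two halves; for connected `β` it
is therefore trivial, so `|β| + |β⁻¹γ| ≥ 2n - 1`, and `≥ 2n` because `|β| + |β⁻¹γ| ≡ |γ|` is even.
With `|β₁⁻¹γ| ≤ |β₁⁻¹β₂| + |γ⁻¹β₂|`, `|γ| ≤ |β₃| + |γ⁻¹β₃|`,
`|γ| ≤ |γ⁻¹β₂| + |β₂⁻¹β₃| + |β₃⁻¹β₄| + |β₄|` and `|γ| ≥ 2n - 2` the bound follows.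
-/

namespace Setoid

variable {α : Type*}

theorem map_of_le_surjective {r s : Setoid α} (h : r ≤ s) : Function.Surjective (map_of_le h) :=
  fun q => q.inductionOn fun a => ⟨Quotient.mk r a, rfl⟩

variable [Finite α]

theorem card_quotient_le_card (r : Setoid α) : Nat.card (Quotient r) ≤ Nat.card α :=
  Nat.card_le_card_of_surjective _ Quotient.mk_surjective

theorem card_quotient_le_card_quotient_of_le {r s : Setoid α} (h : r ≤ s) :
    Nat.card (Quotient s) ≤ Nat.card (Quotient r) :=
  Nat.card_le_card_of_surjective _ (map_of_le_surjective h)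

theorem card_quotient_lt_card_quotient_of_lt {r s : Setoid α} (h : r < s) :
    Nat.card (Quotient s) < Nat.card (Quotient r) := by
  have := Fintype.ofFinite (Quotient r)
  have := Fintype.ofFinite (Quotient s)
  rw [Nat.card_eq_fintype_card, Nat.card_eq_fintype_card]
  refine Fintype.card_lt_of_surjective_not_injective _ (map_of_le_surjective h.le)
    fun hinj => h.not_ge fun a b hab => Quotient.exact (@hinj ⟦a⟧ ⟦b⟧ (Quotient.sound hab))

theorem card_quotient_le_card_quotient_sup_add_one (r : Setoid α) (x y : α) :
    Nat.card (Quotient r) ≤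
      Nat.card (Quotient (r ⊔ Relation.EqvGen.setoid fun a b => a = x ∧ b = y)) + 1 := by
  classical
  let f : α → Quotient r := fun a => if r a y then ⟦x⟧ else ⟦a⟧
  have hker : r ⊔ Relation.EqvGen.setoid (fun a b => a = x ∧ b = y) ≤ ker f := by
    refine sup_le (fun a b hab => ?_) (eqvGen_le ?_)
    · have hy : r a y ↔ r b y := ⟨r.trans (r.symm hab), r.trans hab⟩
      simp only [ker_def, f, hy, Quotient.sound hab]
    · rintro a b ⟨rfl, rfl⟩
      simp [ker_def, f]
  have hcover : Set.univ ⊆ insert ⟦y⟧ (Set.range f) := by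
    rintro q -
    induction q using Quotient.inductionOn with
    | h a =>
      by_cases ha : r a y
      · exact Or.inl (Quotient.sound ha)
      · exact Or.inr ⟨a, if_neg ha⟩
  calc Nat.card (Quotient r) = (Set.univ : Set (Quotient r)).ncard := Set.ncard_univ _ |>.symm
    _ ≤ (Set.range f).ncard + 1 := (Set.ncard_le_ncard hcover).trans (Set.ncard_insert_le _ _)
    _ = Nat.card (Quotient (ker f)) + 1 := by
      rw [Nat.card_congr (quotientKerEquivRange f), Nat.card_coe_set_eq]
    _ ≤ _ := by grw [card_quotient_le_card_quotient_of_le hker]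

/-- Semimodularity of the partition lattice. -/
theorem card_quotient_add_card_quotient_le (r s : Setoid α) :
    Nat.card (Quotient r) + Nat.card (Quotient s) ≤ Nat.card α + Nat.card (Quotient (r ⊔ s)) := by
  by_cases hs : ∀ x y, s x y → x = y
  · have hsr : s ≤ r := fun x y hxy => hs x y hxy ▸ r.refl x
    have hcard : Nat.card (Quotient s) = Nat.card α :=
      (Nat.card_eq_of_bijective _ ⟨fun x y hxy => hs x y (Quotient.exact hxy),
        Quotient.mk_surjective⟩).symm
    rw [sup_eq_left.2 hsr, hcard, add_comm]
  push Not at hs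
  obtain ⟨x, y, hxy, hne⟩ := hs
  -- split `x` off its `s`-class; adding back the pair `x ~ y` recovers `s`
  set s' := s ⊓ ker (· = x)
  have hlt : s' < s := by
    refine lt_of_le_of_ne inf_le_left fun heq => hne ?_
    exact (by simpa using (heq ▸ hxy : s' x y).2.symm : y = x).symm
  set J := s' ⊔ Relation.EqvGen.setoid fun a b => a = x ∧ b = y
  have hJ : s ≤ J := by
    have hs'J : ∀ {a b}, s' a b → J a b := fun h => le_sup_left (b := Relation.EqvGen.setoid _) h
    have hxa : ∀ a, s x a → J x a := by
      intro a hxa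
      rcases eq_or_ne a x with rfl | ha
      · exact J.refl _
      · exact J.trans (le_sup_right (a := s') (Relation.EqvGen.rel _ _ ⟨rfl, rfl⟩))
          (hs'J ⟨s.trans (s.symm hxy) hxa, by simp [ha, hne.symm]⟩)
    intro a b hab
    rcases eq_or_ne a x with rfl | ha
    · exact hxa b hab
    rcases eq_or_ne b x with rfl | hb
    · exact J.symm (hxa a (s.symm hab))
    exact hs'J ⟨hab, by simp [ha, hb]⟩
  have hle : r ⊔ s ≤ (r ⊔ s') ⊔ Relation.EqvGen.setoid fun a b => a = x ∧ b = y := by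
    rw [sup_assoc]
    exact sup_le_sup_left hJ r
  have h₁ := card_quotient_lt_card_quotient_of_lt hlt
  have h₂ := card_quotient_add_card_quotient_le r s'
  have h₃ := card_quotient_le_card_quotient_sup_add_one (r ⊔ s') x y
  have h₄ := card_quotient_le_card_quotient_of_le hle
  omega
termination_by Nat.card α - Nat.card (Quotient s)
decreasing_by exact Nat.sub_lt_sub_left (h₁.trans_le (card_quotient_le_card _)) h₁

end Setoid

open Equiv Perm

theorem Equiv.Perm.SameCycle.setoid_le {α : Type*} {σ : Perm α} {s : Setoid α}
    (h : ∀ a, s a (σ a)) : SameCycle.setoid σ ≤ s := by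
  rintro a _ ⟨i, rfl⟩
  induction i using Int.induction_on with
  | zero => exact s.refl a
  | succ i ih => rw [add_comm, zpow_one_add, mul_apply]; exact s.trans ih (h _)
  | pred i ih =>
    have hinv : s (σ⁻¹ ((σ ^ (-(i : ℤ))) a)) ((σ ^ (-(i : ℤ))) a) := by
      simpa using h (σ⁻¹ ((σ ^ (-(i : ℤ))) a))
    rw [sub_eq_neg_add, zpow_add, zpow_neg_one, mul_apply]
    exact s.trans ih (s.symm hinv)

theorem sameCycle_setoid_mul_le {α : Type*} (σ τ : Perm α) :
    SameCycle.setoid (σ * τ) ≤ SameCycle.setoid σ ⊔ SameCycle.setoid τ :=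
  SameCycle.setoid_le fun a =>
    (SameCycle.setoid σ ⊔ SameCycle.setoid τ).trans
      (le_sup_right (a := SameCycle.setoid σ) (SameCycle.refl τ a).apply_right)
      (le_sup_left (b := SameCycle.setoid τ) (SameCycle.refl σ (τ a)).apply_right)

section CycleCount

variable {α : Type*} [Fintype α] [DecidableEq α]

noncomputable def cycleLabel (σ : Perm α) (x : α) : σ.cycleFactorsFinset ⊕ Function.fixedPoints σ :=
  if h : σ x = x then .inr ⟨x, h⟩
  else .inl ⟨σ.cycleOf x, cycleOf_mem_cycleFactorsFinset_iff.2 (mem_support.2 h)⟩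

theorem cycleLabel_eq_iff (σ : Perm α) (a b : α) :
    cycleLabel σ a = cycleLabel σ b ↔ σ.SameCycle a b := by
  by_cases ha : σ a = a <;> by_cases hb : σ b = b <;>
    simp only [cycleLabel, ha, hb, dite_true, dite_false, reduceCtorEq, false_iff, Sum.inr.injEq,
      Sum.inl.injEq, Subtype.mk.injEq]
  · exact ⟨fun h => by rw [Subtype.mk.inj h],
      fun h => Subtype.ext (h.eq_of_left ha)⟩
  · exact fun h => hb (h.eq_of_left ha ▸ ha)
  · exact fun h => ha (h.eq_of_right hb ▸ hb)
  · exact (sameCycle_iff_cycleOf_eq_of_mem_support (mem_support.2 ha) (mem_support.2 hb)).symm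

theorem cycleLabel_surjective (σ : Perm α) : Function.Surjective (cycleLabel σ) := by
  rintro (⟨c, hc⟩ | ⟨x, hx⟩)
  · obtain ⟨a, ha⟩ := (mem_cycleFactorsFinset_iff.1 hc).1.nonempty_support
    have hσa : σ a ≠ a := mem_support.1 (mem_cycleFactorsFinset_support_le hc ha)
    refine ⟨a, ?_⟩
    simp only [cycleLabel, hσa, dite_false, (cycle_is_cycleOf ha hc).symm]
  · exact ⟨x, by simp only [cycleLabel, show σ x = x from hx, dite_true]⟩

theorem cycleCount_eq_card_quotient (σ : Perm α) :
    cycleCount σ = Nat.card (Quotient (SameCycle.setoid σ)) := by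
  have hker : SameCycle.setoid σ = Setoid.ker (cycleLabel σ) :=
    Setoid.ext fun a b => (cycleLabel_eq_iff σ a b).symm
  rw [hker, Nat.card_congr (Setoid.quotientKerEquivOfSurjective _ (cycleLabel_surjective σ)),
    Nat.card_sum, Nat.card_eq_fintype_card, Nat.card_eq_fintype_card, card_fixedPoints,
    sum_cycleType, cycleCount, cycleType_def, Multiset.card_map, Fintype.card_coe]
  rfl

theorem permLen_add_cycleCount (σ : Perm α) : permLen σ + cycleCount σ = Fintype.card α := by
  refine Nat.sub_add_cancel ?_
  rw [cycleCount_eq_card_quotient, ← Nat.card_eq_fintype_card]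
  exact Setoid.card_quotient_le_card _

theorem permLen_inv (σ : Perm α) : permLen σ⁻¹ = permLen σ := by
  rw [permLen, permLen, cycleCount, cycleCount, cycleType_inv, support_inv]

theorem permLen_mul_le (σ τ : Perm α) : permLen (σ * τ) ≤ permLen σ + permLen τ := by
  have hsemi := Setoid.card_quotient_add_card_quotient_le (SameCycle.setoid σ) (SameCycle.setoid τ)
  have hmul := Setoid.card_quotient_le_card_quotient_of_le (sameCycle_setoid_mul_le σ τ)
  rw [← cycleCount_eq_card_quotient, ← cycleCount_eq_card_quotient, Nat.card_eq_fintype_card]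
    at hsemi
  rw [← cycleCount_eq_card_quotient] at hmul
  have := permLen_add_cycleCount σ
  have := permLen_add_cycleCount τ
  have := permLen_add_cycleCount (σ * τ)
  omega

theorem permLen_inv_mul_comm (σ τ : Perm α) : permLen (σ⁻¹ * τ) = permLen (τ⁻¹ * σ) := by
  rw [← permLen_inv, mul_inv_rev, inv_inv]

theorem permLen_inv_mul_le (σ τ ρ : Perm α) :
    permLen (σ⁻¹ * ρ) ≤ permLen (σ⁻¹ * τ) + permLen (τ⁻¹ * ρ) := by
  simpa [mul_assoc] using permLen_mul_le (σ⁻¹ * τ) (τ⁻¹ * ρ)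

theorem neg_one_pow_permLen (σ : Perm α) : (-1 : ℤˣ) ^ permLen σ = sign σ := by
  have h := permLen_add_cycleCount σ
  have hsupp := σ.support.card_le_univ
  rw [cycleCount] at h
  rw [sign_of_cycleType, sum_cycleType,
    show σ.support.card + Multiset.card σ.cycleType = permLen σ + 2 * Multiset.card σ.cycleType by
      omega,
    pow_add, pow_mul]
  simp

end CycleCount

theorem sameCycle_finRotate {n : ℕ} (a b : Fin n) : (finRotate n).SameCycle a b := by
  have := NeZero.of_pos a.pos
  refine ⟨(b - a).val, ?_⟩
  rw [zpow_natCast, ← iterate_eq_pow, ← finCycle_eq_finRotate_iterate, finCycle_apply,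
    add_sub_cancel]

theorem sameCycle_gammaNN {n : ℕ} {z w : Fin n ⊕ Fin n} (h : z.isLeft = w.isLeft) :
    (gammaNN n).SameCycle z w := by
  have hpow (i : ℤ) : gammaNN n ^ i = Equiv.sumCongr (finRotate n ^ i) (finRotate n ^ i) :=
    (map_zpow (sumCongrHom _ _) (finRotate n, finRotate n) i).symm
  rcases z with a | a <;> rcases w with b | b <;> simp only [Sum.isLeft_inl, Sum.isLeft_inr,
    Bool.true_eq_false, Bool.false_eq_true] at h
  all_goals
    obtain ⟨i, hi⟩ := sameCycle_finRotate a b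
    exact ⟨i, by simp [hpow, hi]⟩

theorem cycleCount_gammaNN_le (n : ℕ) : cycleCount (gammaNN n) ≤ 2 := by
  have hle : Setoid.ker Sum.isLeft ≤ SameCycle.setoid (gammaNN n) :=
    fun _ _ h => sameCycle_gammaNN h
  rw [cycleCount_eq_card_quotient]
  calc Nat.card (Quotient (SameCycle.setoid (gammaNN n)))
      ≤ Nat.card (Quotient (Setoid.ker (Sum.isLeft : Fin n ⊕ Fin n → Bool))) :=
        Setoid.card_quotient_le_card_quotient_of_le hle
    _ ≤ Nat.card Bool := Nat.card_le_card_of_injective _ (Setoid.kerLift_injective _)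
    _ = 2 := by simp

theorem two_mul_sub_two_le_permLen_gammaNN (n : ℕ) : 2 * n - 2 ≤ permLen (gammaNN n) := by
  have h := permLen_add_cycleCount (gammaNN n)
  have := cycleCount_gammaNN_le n
  rw [Fintype.card_sum, Fintype.card_fin] at h
  omega

theorem sign_gammaNN (n : ℕ) : sign (gammaNN n) = 1 := by
  rw [gammaNN, sign_sumCongr, Int.units_mul_self]

theorem IsConnectedPerm.two_mul_le_permLen_add {n : ℕ} {b : Perm (Fin n ⊕ Fin n)}
    (hb : IsConnectedPerm b) : 2 * n ≤ permLen b + permLen (b⁻¹ * gammaNN n) := by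
  obtain ⟨a₀, b₀, hab⟩ := hb
  set J := SameCycle.setoid b ⊔ SameCycle.setoid (b⁻¹ * gammaNN n)
  have hγ : SameCycle.setoid (gammaNN n) ≤ J := by
    simpa using sameCycle_setoid_mul_le b (b⁻¹ * gammaNN n)
  have hJ : ∀ z w, J z w := by
    have hside : ∀ z, J z (Sum.inl a₀) := by
      rintro (a | a)
      · exact hγ (sameCycle_gammaNN rfl)
      · exact J.trans (hγ (sameCycle_gammaNN (w := Sum.inr b₀) rfl))
          (J.symm (le_sup_left (b := SameCycle.setoid (b⁻¹ * gammaNN n)) hab))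
    exact fun z w => J.trans (hside z) (J.symm (hside w))
  have hone : Nat.card (Quotient J) ≤ 1 :=
    Finite.card_le_one_iff_subsingleton.2
      ⟨fun p q => Quotient.inductionOn₂ p q fun z w => Quotient.sound (hJ z w)⟩
  have hsemi : cycleCount b + cycleCount (b⁻¹ * gammaNN n) ≤ 2 * n + Nat.card (Quotient J) := by
    simpa [cycleCount_eq_card_quotient, two_mul] using
      Setoid.card_quotient_add_card_quotient_le (SameCycle.setoid b)
        (SameCycle.setoid (b⁻¹ * gammaNN n))
  have heven : Even (permLen b + permLen (b⁻¹ * gammaNN n)) := by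
    refine (neg_one_pow_eq_one_iff_even (R := ℤˣ) (by decide)).1 ?_
    rw [pow_add, neg_one_pow_permLen, neg_one_pow_permLen, ← Perm.sign_mul, mul_inv_cancel_left,
      sign_gammaNN]
  have h₁ := permLen_add_cycleCount b
  have h₂ := permLen_add_cycleCount (b⁻¹ * gammaNN n)
  rw [Fintype.card_sum, Fintype.card_fin] at h₁ h₂
  obtain ⟨k, hk⟩ := heven
  omega

theorem chainF_connected_ge (n : ℕ) (hn : 1 ≤ n)
    (b₁ b₂ b₃ b₄ : Equiv.Perm (Fin n ⊕ Fin n)) (hconn : IsConnectedPerm b₁) :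
    3 * (2 * n - 2) + 2 ≤ chainF b₁ b₂ b₃ b₄ := by
  have hγ := two_mul_sub_two_le_permLen_gammaNN n
  have h₁ := permLen_inv_mul_le 1 b₃ (gammaNN n)
  have h₂ := permLen_inv_mul_le (gammaNN n) b₂ 1
  have h₃ := permLen_inv_mul_le b₂ b₃ 1
  have h₄ := permLen_inv_mul_le b₃ b₄ 1
  have h₅ := permLen_inv_mul_le b₁ b₂ (gammaNN n)
  have hkey := hconn.two_mul_le_permLen_add
  simp only [inv_one, one_mul, mul_one, permLen_inv] at h₁ h₂ h₃ h₄
  rw [permLen_inv_mul_comm b₃] at h₁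
  rw [permLen_inv_mul_comm b₂] at h₅
  unfold chainF
  omega
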